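/- arXiv:2509.00121 — 3 statements merged into one kernel-verified Lean document; each statement's English description precedes it below -/
import Mathlib

section
/- For every integer n ≥ 4, f(n) ≤ ⌊n/4⌋ + d, where d = 1 if n ≡ 0 (mod 4), d = 2 if n ≡ 1 (mod 4) or n ≡ 2 (mod 4), and d = 4 if n ≡ 3 (mod 4). -/
/-- The Farey fractions of order `n`: the rationals in `[0,1]` whose (reduced) denominator
is at most `n`. -/
def fareySet (n : ℕ) : Finset ℚ :=
  ((Finset.range (n + 1) ×ˢ Finset.range (n + 1)).image fun p => (p.1 : ℚ) / (p.2 : ℚ)).filter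
    fun q => 0 ≤ q ∧ q ≤ 1 ∧ q.den ≤ n

/-- The Farey sequence of order `n`: the Farey fractions of order `n` listed in
increasing order. -/
def fareyList (n : ℕ) : List ℚ := (fareySet n).sort (· ≤ ·)

/-- Two reduced fractions `q = a/b` and `q' = a'/b'` are similarly ordered if
`(a' - a) * (b' - b) ≥ 0`. -/
def SimilarlyOrdered (q q' : ℚ) : Prop :=
  0 ≤ (q'.num - q.num) * ((q'.den : ℤ) - (q.den : ℤ))

/-- `fareyF n` is the largest `m` such that any two fractions whose indices in the Farey
sequence of order `n` differ by at most `m` are similarly ordered. -/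
noncomputable def fareyF (n : ℕ) : ℕ :=
  sSup {m : ℕ | ∀ k l : Fin (fareyList n).length,
    Nat.dist k.val l.val ≤ m →
      SimilarlyOrdered ((fareyList n).get k) ((fareyList n).get l)}

/-!
For each residue of `n` mod 4 we pick Farey fractions `a/b < c/d` of order `n` with `a < c` and
`d < b`; they are not similarly ordered, so `f(n)` is smaller than the number of Farey fractions
in `(a/b, c/d]`. To bound that number we walk from `a/b` to `c/d` through steps `p/q < r/s` with
`q r - p s = 1` and `q + s > n`: a fraction strictly between such `p/q` and `r/s` has denominator
at least `q + s`, so each step contributes at most one fraction of order `n`. The walks pass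
through `k/(2k+1)`, `1/2` and `(k+1)/(2k+1)`.
-/

open Finset

theorem coprime_of_mul_eq_mul_add_one {a b c d : ℕ} (h : b * c = a * d + 1) :
    a.Coprime b ∧ c.Coprime d := by
  constructor
  · refine Nat.eq_one_of_dvd_one <|
      (Nat.dvd_add_right (dvd_mul_of_dvd_left (Nat.gcd_dvd_left a b) d)).mp ?_
    exact h ▸ dvd_mul_of_dvd_left (Nat.gcd_dvd_right a b) c
  · refine Nat.eq_one_of_dvd_one <|
      (Nat.dvd_add_right (dvd_mul_of_dvd_right (Nat.gcd_dvd_right c d) a)).mp ?_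
    exact h ▸ dvd_mul_of_dvd_right (Nat.gcd_dvd_left c d) b

theorem add_le_den_of_lt_of_lt {a b c d : ℕ} {x : ℚ} (h : b * c = a * d + 1)
    (hax : (a : ℚ) / b < x) (hxc : x < (c : ℚ) / d) : b + d ≤ x.den := by
  have hb : 0 < b := Nat.pos_of_ne_zero fun hb => by simp [hb] at h
  have hd : 0 < d := Nat.pos_of_ne_zero fun hd => by
    have : (0 : ℚ) ≤ a / b := by positivity
    simp only [hd, Nat.cast_zero, div_zero] at hxc
    linarith
  rw [← Rat.num_div_den x, div_lt_div_iff₀ (by positivity) (by positivity)] at hax hxc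
  have hlo : (a : ℤ) * x.den < x.num * b := by exact_mod_cast hax
  have hhi : x.num * d < (c : ℤ) * x.den := by exact_mod_cast hxc
  have hdet : (b : ℤ) * c = a * d + 1 := by exact_mod_cast h
  -- `x.den = b (c x.den - x.num d) + d (x.num b - a x.den)` because `b c - a d = 1`
  have : (b : ℤ) + d ≤ x.den := by nlinarith
  exact_mod_cast this

theorem num_den_natCast_div_of_coprime {a b : ℕ} (hb : 0 < b) (hab : a.Coprime b) :
    ((a : ℚ) / b).num = a ∧ ((a : ℚ) / b).den = b := by
  have hb' : (0 : ℤ) < b := by exact_mod_cast hb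
  have h := Rat.num_div_eq_of_coprime (a := a) hb' (by simpa using hab)
  have h' := Rat.den_div_eq_of_coprime (a := a) hb' (by simpa using hab)
  push_cast at h h'
  exact ⟨h, by exact_mod_cast h'⟩

theorem mem_fareySet_iff {n : ℕ} {x : ℚ} : x ∈ fareySet n ↔ 0 ≤ x ∧ x ≤ 1 ∧ x.den ≤ n := by
  refine ⟨fun hx => (mem_filter.mp hx).2, fun ⟨h0, h1, hn⟩ => mem_filter.mpr ⟨?_, h0, h1, hn⟩⟩
  have hnum : x.num.toNat ≤ x.den := by
    have : x.num ≤ x.den := by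
      rw [← Rat.num_div_den x] at h1
      exact_mod_cast (div_le_one (by positivity)).mp h1
    omega
  refine mem_image.mpr ⟨(x.num.toNat, x.den), ?_, ?_⟩
  · simp only [mem_product, mem_range]
    omega
  · have : ((x.num.toNat : ℕ) : ℚ) = x.num := by
      exact_mod_cast Int.toNat_of_nonneg (Rat.num_nonneg.mpr h0)
    rw [this, Rat.num_div_den]

def fareyCountIoc (n : ℕ) (x y : ℚ) : ℕ := #((fareySet n).filter fun z => x < z ∧ z ≤ y)

theorem fareyList_get_strictMono (n : ℕ) : StrictMono (fareyList n).get :=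
  (sortedLT_sort _).strictMono_get

theorem sub_le_fareyCountIoc {n : ℕ} (k l : Fin (fareyList n).length) :
    (l : ℕ) - k ≤ fareyCountIoc n ((fareyList n).get k) ((fareyList n).get l) := by
  have hmono := fareyList_get_strictMono n
  rw [← Nat.card_Ioc]
  refine card_le_card_of_injOn
    (fun j => if h : j < (fareyList n).length then (fareyList n).get ⟨j, h⟩ else 0) ?_ ?_
  · intro j hj
    rw [coe_Ioc, Set.mem_Ioc] at hj
    have hj' : j < (fareyList n).length := hj.2.trans_lt l.isLt
    simp only [dif_pos hj', coe_filter]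
    exact ⟨(mem_sort _).mp (List.get_mem _ _), hmono (show k < ⟨j, hj'⟩ from hj.1),
      hmono.monotone (show ⟨j, hj'⟩ ≤ l from hj.2)⟩
  · intro j hj j' hj' heq
    rw [coe_Ioc, Set.mem_Ioc] at hj hj'
    have hj₁ : j < (fareyList n).length := hj.2.trans_lt l.isLt
    have hj₁' : j' < (fareyList n).length := hj'.2.trans_lt l.isLt
    simp only [dif_pos hj₁, dif_pos hj₁'] at heq
    exact congrArg Fin.val (hmono.injective heq)

theorem fareyF_lt_fareyCountIoc {n : ℕ} {x y : ℚ} (hx : x ∈ fareySet n) (hy : y ∈ fareySet n)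
    (hxy : x < y) (h : ¬ SimilarlyOrdered x y) : fareyF n < fareyCountIoc n x y := by
  obtain ⟨k, rfl⟩ := List.mem_iff_get.mp ((mem_sort (α := ℚ) (· ≤ ·)).mpr hx)
  obtain ⟨l, rfl⟩ := List.mem_iff_get.mp ((mem_sort (α := ℚ) (· ≤ ·)).mpr hy)
  have hkl : k < l := (fareyList_get_strictMono n).lt_iff_lt.mp hxy
  refine lt_of_lt_of_le ?_ (sub_le_fareyCountIoc k l)
  suffices fareyF n ≤ l - k - 1 by omega
  refine csSup_le ⟨0, fun i j hij => ?_⟩ fun m hm => ?_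
  · obtain rfl : i = j := Fin.ext (Nat.eq_of_dist_eq_zero (Nat.le_zero.mp hij))
    simp [SimilarlyOrdered]
  · by_contra! hm'
    exact h (hm k l (by rw [Nat.dist_eq_sub_of_le hkl.le]; omega))

theorem fareyF_lt_fareyCountIoc_of_coprime {n a b c d : ℕ} (hab : a.Coprime b)
    (hcd : c.Coprime d) (hcd' : c ≤ d) (hbn : b ≤ n) (hac : a < c) (hdb : d < b) :
    fareyF n < fareyCountIoc n (a / b) (c / d) := by
  have hb : 0 < b := by omega
  have hd : 0 < d := by omega
  obtain ⟨hnum₁, hden₁⟩ := num_den_natCast_div_of_coprime hb hab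
  obtain ⟨hnum₂, hden₂⟩ := num_den_natCast_div_of_coprime hd hcd
  refine fareyF_lt_fareyCountIoc ?_ ?_ ?_ ?_
  · exact mem_fareySet_iff.mpr ⟨by positivity,
      div_le_one_of_le₀ (by exact_mod_cast (by omega : a ≤ b)) (by positivity), by omega⟩
  · exact mem_fareySet_iff.mpr ⟨by positivity,
      div_le_one_of_le₀ (by exact_mod_cast hcd') (by positivity), by omega⟩
  · rw [div_lt_div_iff₀ (by positivity) (by positivity)]
    exact_mod_cast Nat.mul_lt_mul'' hac hdb
  · rw [SimilarlyOrdered, hnum₁, hden₁, hnum₂, hden₂, not_le]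
    exact mul_neg_of_pos_of_neg (by omega) (by omega)

theorem fareyCountIoc_le_add (n : ℕ) (x y z : ℚ) :
    fareyCountIoc n x z ≤ fareyCountIoc n x y + fareyCountIoc n y z := by
  refine (card_le_card fun w hw => ?_).trans (card_union_le _ _)
  simp only [mem_union, mem_filter] at hw ⊢
  by_cases hwy : w ≤ y
  · exact Or.inl ⟨hw.1, hw.2.1, hwy⟩
  · exact Or.inr ⟨hw.1, not_le.mp hwy, hw.2.2⟩

theorem fareyCountIoc_le_one {n a b c d : ℕ} (h : b * c = a * d + 1) (hn : n < b + d) :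
    fareyCountIoc n (a / b) (c / d) ≤ 1 := by
  refine card_le_one_iff_subset_singleton.mpr ⟨c / d, fun z hz => mem_singleton.mpr ?_⟩
  obtain ⟨hzF, haz, hzc⟩ := mem_filter.mp hz
  refine hzc.eq_or_lt.resolve_right fun hzc' => ?_
  have := add_le_den_of_lt_of_lt h haz hzc'
  have := (mem_fareySet_iff.mp hzF).2.2
  omega

theorem fareyCountIoc_le_of_steps {n lo hi : ℕ} (f : ℕ → ℚ) (hle : lo ≤ hi)
    (hstep : ∀ k, lo ≤ k → k < hi → fareyCountIoc n (f k) (f (k + 1)) ≤ 1) :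
    fareyCountIoc n (f lo) (f hi) ≤ hi - lo := by
  induction hi, hle using Nat.le_induction with
  | base => simp [fareyCountIoc]
  | succ hi hle ih =>
    have := (fareyCountIoc_le_add n (f lo) (f hi) (f (hi + 1))).trans
      (add_le_add (ih fun k hk hk' => hstep k hk (by omega)) (hstep hi hle (by omega)))
    omega

theorem fareyCountIoc_le_of_steps_rev {n lo hi : ℕ} (f : ℕ → ℚ) (hle : lo ≤ hi)
    (hstep : ∀ k, lo ≤ k → k < hi → fareyCountIoc n (f (k + 1)) (f k) ≤ 1) :
    fareyCountIoc n (f hi) (f lo) ≤ hi - lo := by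
  induction hi, hle using Nat.le_induction with
  | base => simp [fareyCountIoc]
  | succ hi hle ih =>
    have := (fareyCountIoc_le_add n (f (hi + 1)) (f hi) (f lo)).trans
      (add_le_add (hstep hi hle (by omega)) (ih fun k hk hk' => hstep k hk (by omega)))
    omega

theorem fareyCountIoc_le_below_half {n lo hi : ℕ} (hle : lo ≤ hi) (hn : n < 4 * lo + 4) :
    fareyCountIoc n (lo / (2 * lo + 1 : ℕ)) (hi / (2 * hi + 1 : ℕ)) ≤ hi - lo :=
  fareyCountIoc_le_of_steps (fun k : ℕ => (k : ℚ) / (2 * k + 1 : ℕ)) hle fun k hk _ =>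
    fareyCountIoc_le_one (by ring) (by omega)

theorem fareyCountIoc_le_above_half {n lo hi : ℕ} (hle : lo ≤ hi) (hn : n < 4 * lo + 4) :
    fareyCountIoc n ((hi + 1 : ℕ) / (2 * hi + 1 : ℕ)) ((lo + 1 : ℕ) / (2 * lo + 1 : ℕ)) ≤
      hi - lo :=
  fareyCountIoc_le_of_steps_rev (fun k : ℕ => ((k + 1 : ℕ) : ℚ) / (2 * k + 1 : ℕ)) hle
    fun k hk _ => fareyCountIoc_le_one (by ring) (by omega)

theorem fareyF_four_mul_add_four_le (M : ℕ) : fareyF (4 * M + 4) ≤ M + 2 := by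
  set n := 4 * M + 4
  set x : ℚ := (2 * M + 1 : ℕ) / (4 * M + 4 : ℕ)
  set y : ℚ := (2 * M + 2 : ℕ) / (4 * M + 3 : ℕ)
  set u : ℚ := (M + 1 : ℕ) / (2 * (M + 1) + 1 : ℕ)
  set v : ℚ := (2 * M + 1 : ℕ) / (2 * (2 * M + 1) + 1 : ℕ)
  set half : ℚ := (1 : ℕ) / (2 : ℕ)
  have hlt : fareyF n < fareyCountIoc n x y :=
    fareyF_lt_fareyCountIoc_of_coprime
      (coprime_of_mul_eq_mul_add_one (c := M + 1) (d := 2 * M + 3) (by ring)).1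
      (coprime_of_mul_eq_mul_add_one (a := 1) (b := 2) (by ring)).2 (by omega) le_rfl
      (by omega) (by omega)
  have hcount : fareyCountIoc n x y ≤ 1 + M + 1 + 1 := calc
    _ ≤ fareyCountIoc n x u + fareyCountIoc n u v + fareyCountIoc n v half
        + fareyCountIoc n half y := by
      linarith [fareyCountIoc_le_add n x u y, fareyCountIoc_le_add n u v y,
        fareyCountIoc_le_add n v half y]
    _ ≤ 1 + M + 1 + 1 := by
      gcongr
      · exact fareyCountIoc_le_one (by ring) (by omega)
      · exact (fareyCountIoc_le_below_half (by omega) (by omega)).trans (by omega)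
      · exact fareyCountIoc_le_one (by ring) (by omega)
      · exact fareyCountIoc_le_one (by ring) (by omega)
  omega

theorem fareyF_le_of_four_mul_add_five_le {n M : ℕ} (hlo : 4 * M + 5 ≤ n)
    (hhi : n ≤ 4 * M + 6) : fareyF n ≤ M + 3 := by
  set x : ℚ := (2 * M + 2 : ℕ) / (4 * M + 5 : ℕ)
  set y : ℚ := (2 * M + 3 : ℕ) / (4 * M + 4 : ℕ)
  set half : ℚ := (1 : ℕ) / (2 : ℕ)
  set u : ℚ := (2 * M + 2 + 1 : ℕ) / (2 * (2 * M + 2) + 1 : ℕ)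
  set w : ℚ := (M + 1 + 1 : ℕ) / (2 * (M + 1) + 1 : ℕ)
  have hlt : fareyF n < fareyCountIoc n x y :=
    fareyF_lt_fareyCountIoc_of_coprime
      (coprime_of_mul_eq_mul_add_one (c := 1) (d := 2) (by ring)).1
      (coprime_of_mul_eq_mul_add_one (a := M + 2) (b := 2 * M + 3) (by ring)).2 (by omega) hlo
      (by omega) (by omega)
  have hcount : fareyCountIoc n x y ≤ 1 + 1 + (M + 1) + 1 := calc
    _ ≤ fareyCountIoc n x half + fareyCountIoc n half u + fareyCountIoc n u w
        + fareyCountIoc n w y := by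
      linarith [fareyCountIoc_le_add n x half y, fareyCountIoc_le_add n half u y,
        fareyCountIoc_le_add n u w y]
    _ ≤ 1 + 1 + (M + 1) + 1 := by
      gcongr
      · exact fareyCountIoc_le_one (by ring) (by omega)
      · exact fareyCountIoc_le_one (by ring) (by omega)
      · exact (fareyCountIoc_le_above_half (by omega) (by omega)).trans (by omega)
      · exact fareyCountIoc_le_one (by ring) (by omega)
  omega

theorem fareyF_four_mul_add_eleven_le (M : ℕ) : fareyF (4 * M + 11) ≤ M + 6 := by
  set n := 4 * M + 11
  set x : ℚ := (2 * M + 4 : ℕ) / (4 * M + 9 : ℕ)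
  set y : ℚ := (2 * M + 5 : ℕ) / (4 * M + 8 : ℕ)
  set v : ℚ := (2 * M + 5 : ℕ) / (2 * (2 * M + 5) + 1 : ℕ)
  set half : ℚ := (1 : ℕ) / (2 : ℕ)
  set u : ℚ := (2 * M + 5 + 1 : ℕ) / (2 * (2 * M + 5) + 1 : ℕ)
  set w : ℚ := (M + 2 + 1 : ℕ) / (2 * (M + 2) + 1 : ℕ)
  have hlt : fareyF n < fareyCountIoc n x y :=
    fareyF_lt_fareyCountIoc_of_coprime
      (coprime_of_mul_eq_mul_add_one (c := 2 * M + 5) (d := 2 * (2 * M + 5) + 1) (by ring)).1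
      (coprime_of_mul_eq_mul_add_one (a := M + 3) (b := 2 * M + 5) (by ring)).2 (by omega)
      (by omega) (by omega) (by omega)
  have hcount : fareyCountIoc n x y ≤ 1 + 1 + 1 + (M + 3) + 1 := calc
    _ ≤ fareyCountIoc n x v + fareyCountIoc n v half + fareyCountIoc n half u
        + fareyCountIoc n u w + fareyCountIoc n w y := by
      linarith [fareyCountIoc_le_add n x v y, fareyCountIoc_le_add n v half y,
        fareyCountIoc_le_add n half u y, fareyCountIoc_le_add n u w y]
    _ ≤ 1 + 1 + 1 + (M + 3) + 1 := by
      gcongr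
      · exact fareyCountIoc_le_one (by ring) (by omega)
      · exact fareyCountIoc_le_one (by ring) (by omega)
      · exact fareyCountIoc_le_one (by ring) (by omega)
      · exact (fareyCountIoc_le_above_half (by omega) (by omega)).trans (by omega)
      · exact fareyCountIoc_le_one (by ring) (by omega)
  omega

theorem fareyF_seven_le : fareyF 7 ≤ 4 := by
  set x : ℚ := (1 : ℕ) / (6 : ℕ)
  set y : ℚ := (2 : ℕ) / (5 : ℕ)
  set p₁ : ℚ := (1 : ℕ) / (5 : ℕ)
  set p₂ : ℚ := (1 : ℕ) / (4 : ℕ)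
  set p₃ : ℚ := (2 : ℕ) / (7 : ℕ)
  set p₄ : ℚ := (1 : ℕ) / (3 : ℕ)
  have hlt : fareyF 7 < fareyCountIoc 7 x y :=
    fareyF_lt_fareyCountIoc_of_coprime (by norm_num) (by norm_num) (by omega) (by omega)
      (by omega) (by omega)
  have hcount : fareyCountIoc 7 x y ≤ 5 := calc
    _ ≤ fareyCountIoc 7 x p₁ + fareyCountIoc 7 p₁ p₂ + fareyCountIoc 7 p₂ p₃
        + fareyCountIoc 7 p₃ p₄ + fareyCountIoc 7 p₄ y := by
      linarith [fareyCountIoc_le_add 7 x p₁ y, fareyCountIoc_le_add 7 p₁ p₂ y,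
        fareyCountIoc_le_add 7 p₂ p₃ y, fareyCountIoc_le_add 7 p₃ p₄ y]
    _ ≤ 1 + 1 + 1 + 1 + 1 := by
      gcongr <;> exact fareyCountIoc_le_one (by norm_num) (by norm_num)
  omega

/-- For every integer `n ≥ 4`, `f(n) ≤ ⌊n/4⌋ + d`, where `d = 1` if `n ≡ 0 (mod 4)`,
`d = 2` if `n ≡ 1, 2 (mod 4)` and `d = 4` if `n ≡ 3 (mod 4)`. -/
theorem farey_f_upper_bound (n : ℕ) (hn : 4 ≤ n) :
    fareyF n ≤ n / 4 + (if n % 4 = 0 then 1 else if n % 4 = 3 then 4 else 2) := by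
  split_ifs with h0 h3
  · obtain ⟨M, rfl⟩ : ∃ M, n = 4 * M + 4 := ⟨n / 4 - 1, by omega⟩
    have := fareyF_four_mul_add_four_le M
    omega
  · rcases Nat.lt_or_ge n 11 with h | h
    · obtain rfl : n = 7 := by omega
      have := fareyF_seven_le
      omega
    · obtain ⟨M, rfl⟩ : ∃ M, n = 4 * M + 11 := ⟨n / 4 - 2, by omega⟩
      have := fareyF_four_mul_add_eleven_le M
      omega
  · have := fareyF_le_of_four_mul_add_five_le (n := n) (M := n / 4 - 1) (by omega) (by omega)
    omega
end

section
/- For every integer m ≥ 1, the fractions (2m−1)/(4m) and 2m/(4m−1) both belong to the Farey sequence of order 4m, exactly m + 1 fractions of the Farey sequence of order 4m lie strictly between them, and they are not similarly ordered, i.e. (2m − (2m−1))·((4m−1) − 4m) < 0. -/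
lemma den_div_dvd (a b : ℤ) : (((a : ℚ) / (b : ℚ)).den : ℤ) ∣ b := by
  rw [← Rat.divInt_eq_div]
  exact Rat.den_dvd a b

lemma mem_fareySet {n : ℕ} {q : ℚ} :
    q ∈ fareySet n ↔ 0 ≤ q ∧ q ≤ 1 ∧ q.den ≤ n := by
  constructor
  · intro h
    exact (Finset.mem_filter.mp h).2
  · rintro ⟨h0, h1, hd⟩
    refine Finset.mem_filter.mpr ⟨Finset.mem_image.mpr ⟨(q.num.toNat, q.den), ?_, ?_⟩, h0, h1, hd⟩
    · have hden : (0:ℚ) < (q.den : ℚ) := by exact_mod_cast q.pos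
      have hnum : (q.num : ℚ) ≤ (q.den : ℚ) := by
        have h := q.num_div_den
        rw [← h, div_le_one hden] at h1
        exact h1
      have hnum' : q.num ≤ (q.den : ℤ) := by exact_mod_cast hnum
      refine Finset.mem_product.mpr ⟨Finset.mem_range.mpr ?_, Finset.mem_range.mpr ?_⟩
      · omega
      · omega
    · have h0' : 0 ≤ q.num := Rat.num_nonneg.mpr h0
      simp only
      rw [show ((q.num.toNat : ℕ) : ℚ) = (q.num : ℚ) by exact_mod_cast Int.toNat_of_nonneg h0']
      exact q.num_div_den

/-- For every `m ≥ 1`, the fractions `(2m-1)/(4m)` and `2m/(4m-1)` both belong to the Farey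
sequence of order `4m`, exactly `m + 1` Farey fractions of order `4m` lie strictly between
them, and they are not similarly ordered. -/
theorem farey_upper_bound_mod_zero (m : ℕ) (hm : 1 ≤ m) :
    (2 * (m : ℚ) - 1) / (4 * m) ∈ fareySet (4 * m) ∧
    (2 * (m : ℚ)) / (4 * m - 1) ∈ fareySet (4 * m) ∧
    ((fareySet (4 * m)).filter fun q =>
        (2 * (m : ℚ) - 1) / (4 * m) < q ∧ q < (2 * (m : ℚ)) / (4 * m - 1)).card = m + 1 ∧
    (2 * (m : ℤ) - (2 * (m : ℤ) - 1)) * ((4 * (m : ℤ) - 1) - 4 * (m : ℤ)) < 0 := by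
  have hm1 : (1:ℚ) ≤ (m:ℚ) := by exact_mod_cast hm
  have h4 : (0:ℚ) < 4 * (m:ℚ) := by linarith
  have h4' : (0:ℚ) < 4 * (m:ℚ) - 1 := by linarith
  refine ⟨?_, ?_, ?_, ?_⟩
  · rw [mem_fareySet]
    refine ⟨div_nonneg (by linarith) (by linarith), ?_, ?_⟩
    · rw [div_le_one h4]; linarith
    · have h := den_div_dvd (2 * (m:ℤ) - 1) (4 * (m:ℤ))
      have hcast : ((2 * (m:ℤ) - 1 : ℤ) : ℚ) / ((4 * (m:ℤ) : ℤ) : ℚ)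
          = (2 * (m : ℚ) - 1) / (4 * m) := by push_cast; ring_nf
      rw [hcast] at h
      have := Int.le_of_dvd (by exact_mod_cast h4) h
      omega
  · rw [mem_fareySet]
    refine ⟨div_nonneg (by linarith) (by linarith), ?_, ?_⟩
    · rw [div_le_one h4']; linarith
    · have h := den_div_dvd (2 * (m:ℤ)) (4 * (m:ℤ) - 1)
      have hcast : ((2 * (m:ℤ) : ℤ) : ℚ) / ((4 * (m:ℤ) - 1 : ℤ) : ℚ)
          = (2 * (m : ℚ)) / (4 * m - 1) := by push_cast; ring_nf
      rw [hcast] at h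
      have := Int.le_of_dvd (by exact_mod_cast h4') h
      omega
  · have hset : ((fareySet (4 * m)).filter fun q =>
        (2 * (m : ℚ) - 1) / (4 * m) < q ∧ q < (2 * (m : ℚ)) / (4 * m - 1))
        = insert ((1:ℚ)/2) ((Finset.Icc m (2 * m - 1)).image fun k : ℕ => (k : ℚ) / (2 * k + 1)) := by
      ext q
      simp only [Finset.mem_filter, mem_fareySet, Finset.mem_insert, Finset.mem_image,
        Finset.mem_Icc]
      constructor
      · rintro ⟨⟨hq0, hq1, hqden⟩, hL, hR⟩
        have hbpos : 0 < (q.den : ℤ) := by exact_mod_cast q.pos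
        have hble0 : (q.den : ℤ) ≤ 4 * (m:ℤ) := by exact_mod_cast hqden
        have hbQ : (0:ℚ) < (q.den : ℚ) := by exact_mod_cast q.pos
        have hqeq : q = (q.num : ℚ) / (q.den : ℚ) := (q.num_div_den).symm
        set a : ℤ := q.num with ha
        set b : ℤ := (q.den : ℤ) with hb
        have hab1 : (2 * (m:ℤ) - 1) * b < a * (4 * m) := by
          rw [hqeq, div_lt_div_iff₀ h4 hbQ] at hL
          exact_mod_cast hL
        have hab2 : a * (4 * (m:ℤ) - 1) < 2 * m * b := by
          rw [hqeq, div_lt_div_iff₀ hbQ h4'] at hR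
          exact_mod_cast hR
        have ha0 : 0 ≤ a := Rat.num_nonneg.mpr hq0
        have hble : b ≤ 4 * (m:ℤ) := hble0
        have hmZ : 1 ≤ (m:ℤ) := by exact_mod_cast hm
        rcases lt_trichotomy (2 * a) b with hlt | heq | hgt
        · -- q = a/(2a+1) with m ≤ a ≤ 2m-1
          right
          have hb1 : b - 2 < 2 * a := by
            by_contra hcon
            push_neg at hcon
            nlinarith [mul_le_mul_of_nonneg_left hcon (by linarith : (0:ℤ) ≤ 2 * (m:ℤ))]
          have hbeq : b = 2 * a + 1 := by omega
          have ham : (m:ℤ) ≤ a := by nlinarith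
          have ham2 : a ≤ 2 * (m:ℤ) - 1 := by omega
          refine ⟨a.toNat, ⟨by omega, by omega⟩, ?_⟩
          rw [hqeq]
          have h1 : ((a.toNat : ℕ) : ℚ) = (a : ℚ) := by exact_mod_cast Int.toNat_of_nonneg ha0
          have h2 : ((q.den : ℕ) : ℚ) = 2 * (a:ℚ) + 1 := by exact_mod_cast hbeq
          rw [h1, h2]
        · -- q = 1/2
          left
          have haz : 0 < a := by omega
          have haQ : (a:ℚ) ≠ 0 := by
            exact_mod_cast haz.ne'
          have h2 : ((q.den : ℕ) : ℚ) = 2 * (a:ℚ) := by exact_mod_cast heq.symm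
          rw [hqeq, h2]
          field_simp
        · exfalso
          have hb4 : 4 * (m:ℤ) ≤ b := by
            nlinarith [mul_le_mul_of_nonneg_right (by omega : b + 1 ≤ 2 * a)
              (by linarith : (0:ℤ) ≤ 4 * (m:ℤ) - 1)]
          have hbeq : b = 4 * (m:ℤ) := le_antisymm hble hb4
          have ha' : 2 * (m:ℤ) + 1 ≤ a := by omega
          nlinarith [mul_le_mul_of_nonneg_right ha' (by linarith : (0:ℤ) ≤ 4 * (m:ℤ) - 1)]
      · rintro (rfl | ⟨k, ⟨hk1, hk2⟩, rfl⟩)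
        · refine ⟨⟨by norm_num, by norm_num, ?_⟩, ?_, ?_⟩
          · have : ((1:ℚ)/2).den = 2 := by norm_num
            omega
          · rw [div_lt_div_iff₀ h4 (by norm_num : (0:ℚ) < 2)]; linarith
          · rw [div_lt_div_iff₀ (by norm_num : (0:ℚ) < 2) h4']; linarith
        · have hkm : (m:ℚ) ≤ (k:ℚ) := by exact_mod_cast hk1
          have hkm2 : (k:ℚ) ≤ 2 * (m:ℚ) - 1 := by
            have : k ≤ 2 * m - 1 := hk2
            have : (k:ℚ) ≤ ((2*m-1 : ℕ) : ℚ) := by exact_mod_cast this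
            push_cast [Nat.cast_sub (by omega : 1 ≤ 2*m)] at this
            linarith
          have hkpos : (0:ℚ) < 2 * (k:ℚ) + 1 := by linarith
          refine ⟨⟨div_nonneg (by linarith) (by linarith), ?_, ?_⟩, ?_, ?_⟩
          · rw [div_le_one hkpos]; linarith
          · have h := den_div_dvd (k : ℤ) (2 * (k:ℤ) + 1)
            have hcast : (((k:ℤ) : ℤ) : ℚ) / ((2 * (k:ℤ) + 1 : ℤ) : ℚ)
                = (k : ℚ) / (2 * k + 1) := by push_cast; ring_nf
            rw [hcast] at h
            have hp : (0:ℤ) < 2 * (k:ℤ) + 1 := by exact_mod_cast hkpos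
            have := Int.le_of_dvd hp h
            omega
          · rw [div_lt_div_iff₀ h4 hkpos]; nlinarith
          · rw [div_lt_div_iff₀ hkpos h4']; nlinarith
    rw [hset]
    rw [Finset.card_insert_of_notMem, Finset.card_image_of_injOn, Nat.card_Icc]
    · omega
    · intro j hj k hk h
      simp only at h
      have hjp : (0:ℚ) < 2 * (j:ℚ) + 1 := by positivity
      have hkp : (0:ℚ) < 2 * (k:ℚ) + 1 := by positivity
      rw [div_eq_div_iff hjp.ne' hkp.ne'] at h
      have h' : (j:ℚ) = (k:ℚ) := by nlinarith
      exact_mod_cast h'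
    · simp only [Finset.mem_image, Finset.mem_Icc]
      rintro ⟨k, ⟨hk1, hk2⟩, h⟩
      have hkp : (0:ℚ) < 2 * (k:ℚ) + 1 := by positivity
      rw [div_eq_div_iff hkp.ne' (by norm_num : (2:ℚ) ≠ 0)] at h
      linarith
  · have h : (2 * (m : ℤ) - (2 * (m : ℤ) - 1)) * ((4 * (m : ℤ) - 1) - 4 * (m : ℤ)) = -1 := by ring
    omega
end

section
/- For every positive integer n, the number N of fractions in the Farey sequence of order n satisfies N > 3n²/π² − (n/2)(log n + 2), where log denotes the natural logarithm. -/
/-!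
The fractions `a / b` with `0 ≤ a < b ≤ n` and `gcd(a, b) = 1`, together with `1`, are distinct
Farey fractions, so `N ≥ 1 + ∑_{b ≤ n} φ(b)`. Möbius inversion of `∑_{d ∣ b} φ(d) = b` gives
`∑_{b ≤ n} φ(b) = ∑_{d ≤ n} μ(d) T(⌊n/d⌋)` with `T(m) = m(m+1)/2`, and `T(⌊x⌋)` differs from
`x²/2` by at most `x/2`. Hence the sum is at least `(n²/2) ∑_{d ≤ n} μ(d)/d² - (n/2) H_n`, where
`∑_{d ≤ n} μ(d)/d² ≥ 1/ζ(2) - 1/n = 6/π² - 1/n` and `H_n ≤ 1 + log n`.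
-/

open Finset ArithmeticFunction Filter
open scoped ArithmeticFunction.Moebius LSeries.notation

theorem Rat.den_natCast_div_eq_of_coprime {a b : ℕ} (hb : 0 < b) (h : a.Coprime b) :
    ((a : ℚ) / b).den = b := by
  have := Rat.den_div_eq_of_coprime (a := a) (b := b) (mod_cast hb) (by simpa using h)
  rw [Int.cast_natCast, Int.cast_natCast] at this
  exact_mod_cast this

theorem natCast_div_mem_fareySet {n a b : ℕ} (hab : a < b) (hbn : b ≤ n) (h : a.Coprime b) :
    (a / b : ℚ) ∈ fareySet n := by
  have hb : (0 : ℚ) < b := by exact_mod_cast a.zero_le.trans_lt hab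
  simp only [fareySet, mem_filter, mem_image, mem_product, mem_range, Prod.exists]
  refine ⟨⟨a, b, ⟨by omega, by omega⟩, rfl⟩, by positivity, ?_, ?_⟩
  · rw [div_le_one hb]; exact_mod_cast hab.le
  · rw [Rat.den_natCast_div_eq_of_coprime (by exact_mod_cast hb) h]; exact hbn

theorem one_mem_fareySet {n : ℕ} (hn : n ≠ 0) : (1 : ℚ) ∈ fareySet n := by
  simp only [fareySet, mem_filter, mem_image, mem_product, mem_range, Prod.exists]
  refine ⟨⟨1, 1, ⟨by omega, by omega⟩, by norm_num⟩, by norm_num, le_rfl, by simp; omega⟩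

theorem one_add_sum_totient_le_card_fareySet {n : ℕ} (hn : n ≠ 0) :
    1 + ∑ b ∈ Ioc 0 n, b.totient ≤ #(fareySet n) := by
  set S := (Ioc 0 n).sigma fun b ↦ {a ∈ range b | b.Coprime a}
  set f : (_ : ℕ) × ℕ → ℚ := fun p ↦ p.2 / p.1
  have hmem : ∀ p ∈ S, p.2 < p.1 ∧ p.1 ≤ n ∧ p.2.Coprime p.1 := fun p hp ↦ by
    simp only [S, mem_sigma, mem_Ioc, mem_filter, mem_range] at hp
    exact ⟨hp.2.1, hp.1.2, hp.2.2.symm⟩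
  have hinj : Set.InjOn f S := by
    rintro ⟨b, a⟩ hp ⟨b', a'⟩ hp' heq
    obtain ⟨hab, -, hcop⟩ : a < b ∧ _ ∧ _ := hmem _ hp
    obtain ⟨hab', -, hcop'⟩ : a' < b' ∧ _ ∧ _ := hmem _ hp'
    have hbb' : b = b' := by
      simpa [f, Rat.den_natCast_div_eq_of_coprime (a.zero_le.trans_lt hab) hcop,
        Rat.den_natCast_div_eq_of_coprime (a'.zero_le.trans_lt hab') hcop'] using
        congrArg Rat.den heq
    subst hbb'
    have hb : (b : ℚ) ≠ 0 := by exact_mod_cast (show b ≠ 0 by omega)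
    simpa [f, div_left_inj' hb] using heq
  have hone : 1 ∉ S.image f := by
    intro h1
    obtain ⟨⟨b, a⟩, hp, hab1⟩ := mem_image.mp h1
    obtain ⟨hab, -, -⟩ : a < b ∧ _ ∧ _ := hmem _ hp
    have hb : (b : ℚ) ≠ 0 := by exact_mod_cast (show b ≠ 0 by omega)
    rw [div_eq_one_iff_eq hb] at hab1
    exact hab.ne (mod_cast hab1)
  have hsub : insert 1 (S.image f) ⊆ fareySet n := by
    refine insert_subset (one_mem_fareySet hn) fun q hq ↦ ?_
    obtain ⟨p, hp, rfl⟩ := mem_image.mp hq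
    obtain ⟨hab, hbn, hcop⟩ := hmem p hp
    exact natCast_div_mem_fareySet hab hbn hcop
  calc 1 + ∑ b ∈ Ioc 0 n, b.totient = #(insert 1 (S.image f)) := by
        rw [card_insert_of_notMem hone, card_image_of_injOn hinj, card_sigma, add_comm]; rfl
    _ ≤ #(fareySet n) := card_le_card hsub

theorem sum_Ioc_totient_eq_sum_moebius_mul_sum_Ioc (N : ℕ) :
    ∑ b ∈ Ioc 0 N, (b.totient : ℝ) = ∑ d ∈ Ioc 0 N, (μ d : ℝ) * ∑ m ∈ Ioc 0 (N / d), (m : ℝ) := by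
  have inversion := (sum_eq_iff_sum_mul_moebius_eq (f := fun n ↦ (n.totient : ℝ))
    (g := fun n ↦ (n : ℝ))).mp fun n _ ↦ mod_cast Nat.sum_totient n
  calc ∑ b ∈ Ioc 0 N, (b.totient : ℝ)
      = ∑ b ∈ Ioc 0 N,
          ((μ : ArithmeticFunction ℝ) * (ArithmeticFunction.id : ArithmeticFunction ℝ)) b :=
        sum_congr rfl fun b hb ↦ by
          rw [mul_apply, ← inversion b (mem_Ioc.mp hb).1]
          simp
    _ = _ := by rw [sum_Ioc_mul_eq_sum_sum]; simp

theorem sum_Ioc_natCast_eq (m : ℕ) : ∑ i ∈ Ioc 0 m, (i : ℝ) = m * (m + 1) / 2 := by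
  induction m with
  | zero => simp
  | succ k ih => rw [sum_Ioc_succ_top (Nat.zero_le k), ih]; push_cast; ring

theorem abs_floor_triangle_sub_sq_le {K : Type*} [Field K] [LinearOrder K]
    [IsStrictOrderedRing K] [FloorSemiring K] {x : K} (hx : 0 ≤ x) :
    |(⌊x⌋₊ : K) * (⌊x⌋₊ + 1) / 2 - x ^ 2 / 2| ≤ x / 2 := by
  have h₁ := Nat.floor_le hx
  have h₂ := Nat.lt_floor_add_one x
  have h₀ : (0 : K) ≤ ⌊x⌋₊ := Nat.cast_nonneg _
  rw [abs_le]
  constructor <;> nlinarith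

theorem le_moebius_mul_sum_Ioc_div (n d : ℕ) :
    (μ d : ℝ) * ((n : ℝ) / d) ^ 2 / 2 - (n : ℝ) / d / 2 ≤
      (μ d : ℝ) * ∑ m ∈ Ioc 0 (n / d), (m : ℝ) := by
  have hdev := abs_floor_triangle_sub_sq_le (by positivity : 0 ≤ (n : ℝ) / d)
  have hμ : |(μ d : ℝ)| ≤ 1 := mod_cast abs_moebius_le_one
  rw [Nat.floor_div_eq_div] at hdev
  have h := (abs_mul _ _).trans_le ((mul_le_of_le_one_left (abs_nonneg _) hμ).trans hdev)
  rw [mul_sub] at h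
  rw [sum_Ioc_natCast_eq]
  linarith [(abs_le.mp h).1]

theorem hasSum_moebius_div_sq : HasSum (fun d : ℕ ↦ (μ d : ℝ) / d ^ 2) (6 / Real.pi ^ 2) := by
  have h2 : 1 < (2 : ℂ).re := by norm_num
  have hL : L ↗μ 2 = 6 / Real.pi ^ 2 := by
    have := LSeries_zeta_mul_Lseries_moebius h2
    rw [LSeries_zeta_eq_riemannZeta h2, riemannZeta_two] at this
    have hπ : (Real.pi : ℂ) ≠ 0 := mod_cast Real.pi_ne_zero
    field_simp at this ⊢
    linear_combination this
  have hsum := (LSeriesSummable_moebius_iff.mpr h2).LSeriesHasSum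
  rw [hL, LSeriesHasSum] at hsum
  rw [← Complex.hasSum_ofReal]
  convert hsum using 1
  · funext d
    rcases eq_or_ne d 0 with rfl | hd
    · simp
    · rw [LSeries.term_of_ne_zero hd, show (2 : ℂ) = ((2 : ℕ) : ℂ) by norm_num,
        Complex.cpow_natCast]
      push_cast; rfl
  · push_cast; rfl

theorem HasSum.sub_sum_range_le_inv {f : ℕ → ℝ} {a : ℝ} (hf : HasSum f a) {n : ℕ} (hn : n ≠ 0)
    (hle : ∀ i, n < i → f i ≤ ((i : ℝ) ^ 2)⁻¹) :
    a - ∑ i ∈ range (n + 1), f i ≤ (n : ℝ)⁻¹ := by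
  have htail : ∀ N, n ≤ N → ∑ i ∈ range (N + 1), f i ≤ ∑ i ∈ range (n + 1), f i + (n : ℝ)⁻¹ := by
    intro N hN
    rw [← sum_range_add_sum_Ico _ (by omega : n + 1 ≤ N + 1), Ico_add_one_add_one_eq_Ioc]
    have hsq := sum_Ioc_inv_sq_le_sub (α := ℝ) hn hN
    have hN0 : (0 : ℝ) ≤ (N : ℝ)⁻¹ := by positivity
    have : ∑ i ∈ Ioc n N, f i ≤ ∑ i ∈ Ioc n N, ((i : ℝ) ^ 2)⁻¹ :=
      sum_le_sum fun i hi ↦ hle i (mem_Ioc.mp hi).1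
    linarith
  have hlim := (tendsto_add_atTop_iff_nat 1).mpr hf.tendsto_sum_nat
  have := le_of_tendsto hlim (eventually_atTop.mpr ⟨n, htail⟩)
  linarith

theorem sum_Ioc_moebius_div_sq_ge {n : ℕ} (hn : n ≠ 0) :
    6 / Real.pi ^ 2 - (n : ℝ)⁻¹ ≤ ∑ d ∈ Ioc 0 n, (μ d : ℝ) / d ^ 2 := by
  have h := hasSum_moebius_div_sq.sub_sum_range_le_inv hn fun d _ ↦ by
    rw [div_eq_mul_inv]
    exact mul_le_of_le_one_left (by positivity) (mod_cast (abs_le.mp abs_moebius_le_one).2)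
  rw [range_eq_Ico, sum_eq_sum_Ico_succ_bot n.succ_pos] at h
  rw [← Ico_add_one_add_one_eq_Ioc]
  simp only [ArithmeticFunction.map_zero, Int.cast_zero, zero_div, zero_add,
    Nat.succ_eq_add_one] at h ⊢
  linarith

theorem sum_Ioc_inv_le_one_add_log (n : ℕ) : ∑ i ∈ Ioc 0 n, ((i : ℝ))⁻¹ ≤ 1 + Real.log n := by
  have := harmonic_le_one_add_log n
  rw [harmonic_eq_sum_Icc, ← zero_add 1, Icc_add_one_left_eq_Ioc] at this
  push_cast at this
  exact this

theorem sum_Ioc_totient_ge {n : ℕ} (hn : n ≠ 0) :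
    3 * (n : ℝ) ^ 2 / Real.pi ^ 2 - (n : ℝ) / 2 * (Real.log n + 2) ≤
      ∑ b ∈ Ioc 0 n, (b.totient : ℝ) := by
  have hn' : (n : ℝ) ≠ 0 := by exact_mod_cast hn
  calc 3 * (n : ℝ) ^ 2 / Real.pi ^ 2 - (n : ℝ) / 2 * (Real.log n + 2)
      = (n : ℝ) ^ 2 / 2 * (6 / Real.pi ^ 2 - (n : ℝ)⁻¹) - (n : ℝ) / 2 * (1 + Real.log n) := by
        field_simp; ring
    _ ≤ (n : ℝ) ^ 2 / 2 * ∑ d ∈ Ioc 0 n, (μ d : ℝ) / d ^ 2 -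
          (n : ℝ) / 2 * ∑ d ∈ Ioc 0 n, ((d : ℝ))⁻¹ := by
        gcongr
        exacts [sum_Ioc_moebius_div_sq_ge hn, sum_Ioc_inv_le_one_add_log n]
    _ = ∑ d ∈ Ioc 0 n, ((μ d : ℝ) * ((n : ℝ) / d) ^ 2 / 2 - (n : ℝ) / d / 2) := by
        rw [mul_sum, mul_sum, ← sum_sub_distrib]
        refine sum_congr rfl fun d _ ↦ ?_
        ring
    _ ≤ ∑ d ∈ Ioc 0 n, (μ d : ℝ) * ∑ m ∈ Ioc 0 (n / d), (m : ℝ) :=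
        sum_le_sum fun d _ ↦ le_moebius_mul_sum_Ioc_div n d
    _ = ∑ b ∈ Ioc 0 n, (b.totient : ℝ) := (sum_Ioc_totient_eq_sum_moebius_mul_sum_Ioc n).symm

/-- For every positive integer `n`, the number `N` of fractions in the Farey sequence of
order `n` satisfies `N > 3n²/π² − (n/2)(log n + 2)`. -/
theorem farey_card_explicit_lower_bound (n : ℕ) (hn : 1 ≤ n) :
    3 * (n : ℝ) ^ 2 / Real.pi ^ 2 - (n : ℝ) / 2 * (Real.log n + 2) <
      ((fareySet n).card : ℝ) := by
  have hn₀ : n ≠ 0 := by omega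
  have hcard : (1 : ℝ) + ∑ b ∈ Ioc 0 n, (b.totient : ℝ) ≤ #(fareySet n) :=
    mod_cast one_add_sum_totient_le_card_fareySet hn₀
  linarith [sum_Ioc_totient_ge hn₀]
end
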